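/- arXiv:2511.07114 — 5 statements merged into one kernel-verified Lean document; each statement's English description precedes it below -/
import Mathlib

section
/- Let n, a, b be integers with n ≥ 10. Then equations (1)–(5) all hold if and only if (n, a, b) = (10, 2, 6) or (n, a, b) = (11, 1, 3). -/
/-!
With `d = 9 - n`, equations (1), (3) and (4) factor as
`(a + 1)(a d + 2) = 0`, `(2b + 1)(b d + 6) = 0` and `(b - a + 1)((b - a) d + 4) = 0`.
Since `2b + 1` is odd, `b d = -6`. If `a = -1`, then (4) forces `b = -2` or `n = 7`, both
incompatible with `b d = -6` and `n ≥ 10`. Otherwise `a (n - 9) = 2`, so `n - 9 ∣ 2`,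
leaving `n = 10` or `n = 11`, and `a`, `b` are then determined.
-/

theorem mul_add_one_eq_zero_or_of_quadratic {R : Type*} [CommRing R] [NoZeroDivisors R]
    {m k d x : R} (h : x * (m * x + 1) * d + m * k * x = -k) :
    m * x + 1 = 0 ∨ x * d + k = 0 :=
  mul_eq_zero.mp (by linear_combination h)

/-- For integers `n ≥ 10`, the five Diophantine equations expressing
numerical exceptionality of the collection
`O, O(aK−E₁), …, O(aK−Eₙ), O(bK−H), O(2(bK−H))` on the blow-up of `ℙ²` in `n` points
hold if and only if `(n, a, b) = (10, 2, 6)` or `(n, a, b) = (11, 1, 3)`. -/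
theorem stmt0 (n a b : ℤ) (hn : 10 ≤ n) :
    (a * (a + 1) * (9 - n) + 2 * a = -2 ∧
     b * (b + 1) * (9 - n) + 6 * b = -6 ∧
     b * (2 * b + 1) * (9 - n) + 12 * b = -6 ∧
     (a - b) * (a - b - 1) * (9 - n) - 4 * (a - b) = -4 ∧
     (a - 2 * b) * (a - 2 * b - 1) * (9 - n) - 10 * (a - 2 * b) = -10) ↔
    ((n = 10 ∧ a = 2 ∧ b = 6) ∨ (n = 11 ∧ a = 1 ∧ b = 3)) := by
  constructor
  · rintro ⟨h1, -, h3, h4, -⟩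
    have hb : b * (9 - n) + 6 = 0 :=
      (mul_add_one_eq_zero_or_of_quadratic (x := b) (m := 2) (k := 6) (d := 9 - n)
        (by linear_combination h3)).resolve_left (by omega)
    rcases mul_add_one_eq_zero_or_of_quadratic (x := a) (m := 1) (k := 2) (d := 9 - n)
      (by linear_combination h1) with ha | ha
    · obtain rfl : a = -1 := by linarith
      rcases mul_add_one_eq_zero_or_of_quadratic (x := b + 1) (m := 1) (k := 4) (d := 9 - n)
        (by linear_combination h4) with hb' | hb'
      · obtain rfl : b = -2 := by linarith
        omega
      · have : n = 7 := by linear_combination hb - hb'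
        omega
    · have hdvd : n - 9 ∣ 2 := ⟨a, by linear_combination ha⟩
      obtain rfl | rfl : n = 10 ∨ n = 11 := by have := Int.le_of_dvd two_pos hdvd; omega
      · exact .inl ⟨rfl, by linarith, by linarith⟩
      · exact .inr ⟨rfl, by linarith, by linarith⟩
  · rintro (⟨rfl, rfl, rfl⟩ | ⟨rfl, rfl, rfl⟩) <;> norm_num
end

section
/- Let n, b be integers with n ≥ 10 satisfying equations (2) and (3). Then (n, b) ∈ {(10, 6), (11, 3), (12, 2), (15, 1)}. -/
/-! Subtracting (2) from (3) leaves `b · (b (9 - n) + 6) = 0`, and `b ≠ 0` by (2), so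
`b (n - 9) = 6`. For `n ≥ 10` both factors are positive, so `(n - 9, b)` is one of the four
factorisations of `6`. -/

theorem mul_sub_nine_eq_six (n b : ℤ)
    (h2 : b * (b + 1) * (9 - n) + 6 * b = -6)
    (h3 : b * (2 * b + 1) * (9 - n) + 12 * b = -6) :
    b * (n - 9) = 6 := by
  have hb : b ≠ 0 := by rintro rfl; simp at h2
  have hprod : b * (b * (n - 9) - 6) = 0 := by linear_combination h2 - h3
  linarith [(mul_eq_zero.mp hprod).resolve_left hb]

theorem eq_of_mul_eq_six_of_pos (b m : ℤ) (hm : 0 < m) (h : b * m = 6) :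
    (m = 1 ∧ b = 6) ∨ (m = 2 ∧ b = 3) ∨ (m = 3 ∧ b = 2) ∨ (m = 6 ∧ b = 1) := by
  have hb : 0 < b := pos_of_mul_pos_left (h ▸ by norm_num) hm.le
  have hb6 : b ≤ 6 := by nlinarith
  interval_cases b <;> omega

/-- If integers `n, b` with `n ≥ 10` satisfy equations (2) and (3),
then `(n, b) ∈ {(10, 6), (11, 3), (12, 2), (15, 1)}`. -/
theorem stmt3 (n b : ℤ) (hn : 10 ≤ n)
    (h2 : b * (b + 1) * (9 - n) + 6 * b = -6)
    (h3 : b * (2 * b + 1) * (9 - n) + 12 * b = -6) :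
    (n = 10 ∧ b = 6) ∨ (n = 11 ∧ b = 3) ∨ (n = 12 ∧ b = 2) ∨ (n = 15 ∧ b = 1) := by
  have hfactor := mul_sub_nine_eq_six n b h2 h3
  have := eq_of_mul_eq_six_of_pos b (n - 9) (by omega) hfactor
  omega
end

section
/- There are no integers a, b such that equations (1)–(5) hold with n = 12. -/
/-! With `n = 12`, equation (1) forces `a = -1` and equation (3) forces `b = 2`; equation (4)
then reads `-24 = -4`. -/

theorem Int.eq_neg_one_of_three_mul_sq_add_self_eq_two {a : ℤ} (h : 3 * a ^ 2 + a = 2) :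
    a = -1 := by
  have hfactor : (a + 1) * (3 * a - 2) = 0 := by linear_combination h
  rcases mul_eq_zero.1 hfactor with hroot | hroot <;> omega

theorem Int.eq_two_of_two_mul_sq_sub_three_mul_eq_two {b : ℤ} (h : 2 * b ^ 2 - 3 * b = 2) :
    b = 2 := by
  have hfactor : (b - 2) * (2 * b + 1) = 0 := by linear_combination h
  rcases mul_eq_zero.1 hfactor with hroot | hroot <;> omega

/-- There are no integers `a, b` satisfying equations (1)–(5)
with `n = 12`. -/
theorem stmt4 :
    ¬ ∃ a b : ℤ,
      a * (a + 1) * (9 - 12) + 2 * a = -2 ∧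
      b * (b + 1) * (9 - 12) + 6 * b = -6 ∧
      b * (2 * b + 1) * (9 - 12) + 12 * b = -6 ∧
      (a - b) * (a - b - 1) * (9 - 12) - 4 * (a - b) = -4 ∧
      (a - 2 * b) * (a - 2 * b - 1) * (9 - 12) - 10 * (a - 2 * b) = -10 := by
  rintro ⟨a, b, h1, -, h3, h4, -⟩
  obtain rfl : a = -1 :=
    Int.eq_neg_one_of_three_mul_sq_add_self_eq_two (by linear_combination -h1)
  obtain rfl : b = 2 :=
    Int.eq_two_of_two_mul_sq_sub_three_mul_eq_two (by linarith)
  norm_num at h4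
end

section
/- Let a, b be integers. Equations (1)–(5) hold with n = 11 if and only if a = 1 and b = 3. -/
/-- Integers `a, b` satisfy equations (1)–(5) with `n = 11`
if and only if `a = 1` and `b = 3`. -/
theorem stmt7 (a b : ℤ) :
    (a * (a + 1) * (9 - 11) + 2 * a = -2 ∧
     b * (b + 1) * (9 - 11) + 6 * b = -6 ∧
     b * (2 * b + 1) * (9 - 11) + 12 * b = -6 ∧
     (a - b) * (a - b - 1) * (9 - 11) - 4 * (a - b) = -4 ∧
     (a - 2 * b) * (a - 2 * b - 1) * (9 - 11) - 10 * (a - 2 * b) = -10) ↔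
    (a = 1 ∧ b = 3) := by
  constructor
  · rintro ⟨h1, h2, h3, h4, -⟩
    have hb : b = 3 := by
      have : 2 * b = 6 := by linear_combination h3 - 2 * h2
      omega
    subst hb
    have ha : a = 1 := by
      have : 10 * a = 10 := by linear_combination h4 - h1
      omega
    exact ⟨ha, rfl⟩
  · rintro ⟨rfl, rfl⟩
    norm_num
end

section
/- Let n ≥ 1 be an integer and a, b integers. In the Picard lattice of the blow-up of ℙ² in n points, set Dᵢ = aK − Eᵢ (1 ≤ i ≤ n), F = bK − H, and let (G₀, G₁, …, G_{n+2}) = (0, D₁, …, Dₙ, F, 2F). Then (Gᵢ − Gⱼ)·(Gᵢ − Gⱼ − K) = −2 holds for all 0 ≤ i < j ≤ n+2 (i.e., the sequence is numerically exceptional) if and only if the five equations hold: a(a+1)(9−n)+2a = −2, b(b+1)(9−n)+6b = −6, b(2b+1)(9−n)+12b = −6, (a−b)(a−b−1)(9−n)−4(a−b) = −4, and (a−2b)(a−2b−1)(9−n)−10(a−2b) = −10. -/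
/-!
The pairing is bilinear, so for `D = cK + pH + qEᵢ` the number `D·(D − K)` is a quadratic
polynomial in `c, p, q` determined by `K² = 9 − n`, `K·H = −3`, `K·Eᵢ = −1`, `H² = 1`,
`Eᵢ² = −1`, `H·Eᵢ = 0`. Every difference `Gᵢ − Gⱼ` has this shape except `Dᵢ − Dⱼ = Eⱼ − Eᵢ`,
which always satisfies the condition; and `F − 2F = −F` gives the same condition as `0 − F`.
What remains is one equation for each of the other five kinds of pair, read off from the
pairs involving `D₁`.
-/

/-- The Picard lattice of the blow-up of `ℙ²` in `n` points, recorded as the coefficient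
of the hyperplane class `H` together with the coefficients of the exceptional classes
`E₁, …, Eₙ`. -/
abbrev Pic (n : ℕ) := ℤ × (Fin n → ℤ)

/-- The intersection pairing: `H·H = 1`, `Eᵢ·Eᵢ = -1`, `H·Eᵢ = 0`, `Eᵢ·Eⱼ = 0` for `i ≠ j`. -/
def inter {n : ℕ} (D D' : Pic n) : ℤ :=
  D.1 * D'.1 - ∑ i : Fin n, D.2 i * D'.2 i

/-- The hyperplane class `H`. -/
def Hd (n : ℕ) : Pic n := (1, 0)

/-- The exceptional class `Eᵢ` (meaningful for `1 ≤ i ≤ n`). -/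
def Ed (n : ℕ) (i : ℕ) : Pic n := (0, fun j => if (j : ℕ) + 1 = i then 1 else 0)

/-- The canonical class `K = -3H + E₁ + ⋯ + Eₙ`. -/
def Kd (n : ℕ) : Pic n := (-3 : ℤ) • Hd n + ∑ i ∈ Finset.range n, Ed n (i + 1)

/-- The sequence `(G₀, G₁, …, G_{n+2}) = (0, D₁, …, Dₙ, F, 2F)` with
`Dᵢ = aK − Eᵢ` and `F = bK − H`. -/
def G (n : ℕ) (a b : ℤ) (i : ℕ) : Pic n :=
  if i = 0 then 0
  else if i ≤ n then a • Kd n - Ed n i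
  else if i = n + 1 then b • Kd n - Hd n
  else 2 • (b • Kd n - Hd n)

section Intersection

variable {n : ℕ}

lemma inter_comm (D E : Pic n) : inter D E = inter E D := by
  simp only [inter, mul_comm]

lemma inter_add_left (D D' E : Pic n) : inter (D + D') E = inter D E + inter D' E := by
  simp only [inter, Prod.fst_add, Prod.snd_add, Pi.add_apply, add_mul, Finset.sum_add_distrib]
  ring

lemma inter_sub_left (D D' E : Pic n) : inter (D - D') E = inter D E - inter D' E := by
  simp only [inter, Prod.fst_sub, Prod.snd_sub, Pi.sub_apply, sub_mul, Finset.sum_sub_distrib]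
  ring

lemma inter_smul_left (c : ℤ) (D E : Pic n) : inter (c • D) E = c * inter D E := by
  simp only [inter, Prod.smul_fst, Prod.smul_snd, Pi.smul_apply, smul_eq_mul, mul_assoc,
    ← Finset.mul_sum, mul_sub]

lemma inter_add_right (D E E' : Pic n) : inter D (E + E') = inter D E + inter D E' := by
  rw [inter_comm, inter_add_left, inter_comm E, inter_comm E']

lemma inter_sub_right (D E E' : Pic n) : inter D (E - E') = inter D E - inter D E' := by
  rw [inter_comm, inter_sub_left, inter_comm E, inter_comm E']

lemma inter_smul_right (c : ℤ) (D E : Pic n) : inter D (c • E) = c * inter D E := by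
  rw [inter_comm, inter_smul_left, inter_comm]

lemma Kd_fst : (Kd n).1 = -3 := by
  simp [Kd, Hd, Ed, Prod.fst_sum]

lemma Kd_snd (j : Fin n) : (Kd n).2 j = 1 := by
  simp [Kd, Hd, Ed, Prod.snd_sum, Finset.sum_apply]

lemma sum_ite_val_add_one_eq {M : Type*} [AddCommMonoid M] {i : ℕ} (h1 : 1 ≤ i) (h2 : i ≤ n)
    (f : Fin n → M) :
    ∑ j : Fin n, (if (j : ℕ) + 1 = i then f j else 0) = f ⟨i - 1, by omega⟩ := by
  have hj (j : Fin n) : (j : ℕ) + 1 = i ↔ j = ⟨i - 1, by omega⟩ := by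
    simp only [Fin.ext_iff]; omega
  simp only [hj, Finset.sum_ite_eq', Finset.mem_univ, if_true]

lemma inter_Kd_Kd : inter (Kd n) (Kd n) = 9 - n := by
  simp [inter, Kd_fst, Kd_snd]

lemma inter_Kd_Hd : inter (Kd n) (Hd n) = -3 := by
  simp [inter, Kd_fst, Hd]

lemma inter_Hd_Hd : inter (Hd n) (Hd n) = 1 := by
  simp [inter, Hd]

lemma inter_Hd_Ed (i : ℕ) : inter (Hd n) (Ed n i) = 0 := by
  simp [inter, Hd, Ed]

lemma inter_Kd_Ed {i : ℕ} (h1 : 1 ≤ i) (h2 : i ≤ n) : inter (Kd n) (Ed n i) = -1 := by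
  simp only [inter, Kd_fst, Kd_snd, Ed, one_mul, mul_zero, zero_sub, sum_ite_val_add_one_eq h1 h2]

lemma inter_Ed_Ed_self {i : ℕ} (h1 : 1 ≤ i) (h2 : i ≤ n) : inter (Ed n i) (Ed n i) = -1 := by
  simp only [inter, Ed, mul_ite, mul_one, mul_zero, zero_sub, sum_ite_val_add_one_eq h1 h2,
    if_pos (Nat.sub_add_cancel h1)]

lemma inter_Ed_Ed_of_ne {i j : ℕ} (hij : i ≠ j) : inter (Ed n i) (Ed n j) = 0 := by
  simp only [inter, Ed, mul_zero, zero_sub, neg_eq_zero]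
  refine Finset.sum_eq_zero fun k _ => ?_
  split_ifs <;> omega

end Intersection

section Expansion

variable {n : ℕ}

lemma inter_Kd_Hd_self_sub_Kd (c p : ℤ) :
    inter (c • Kd n + p • Hd n) (c • Kd n + p • Hd n - Kd n) =
      c * (c - 1) * (9 - n) - 6 * c * p + p ^ 2 + 3 * p := by
  simp only [inter_add_left, inter_add_right, inter_sub_right, inter_smul_left,
    inter_smul_right, inter_comm (Hd n) (Kd n), inter_Kd_Kd, inter_Kd_Hd, inter_Hd_Hd]
  ring

lemma inter_Kd_Hd_Ed_self_sub_Kd {i : ℕ} (h1 : 1 ≤ i) (h2 : i ≤ n) (c p q : ℤ) :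
    inter (c • Kd n + p • Hd n + q • Ed n i) (c • Kd n + p • Hd n + q • Ed n i - Kd n) =
      c * (c - 1) * (9 - n) - 6 * c * p - 2 * c * q + p ^ 2 - q ^ 2 + 3 * p + q := by
  simp only [inter_add_left, inter_add_right, inter_sub_right, inter_smul_left,
    inter_smul_right, inter_comm (Hd n) (Kd n), inter_comm (Ed n i) (Kd n),
    inter_comm (Ed n i) (Hd n), inter_Kd_Kd, inter_Kd_Hd, inter_Hd_Hd, inter_Kd_Ed h1 h2,
    inter_Hd_Ed, inter_Ed_Ed_self h1 h2]
  ring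

/-- By Riemann–Roch, `χ(D) = D·(D − K)/2 + 1`. -/
def HasZeroEulerChar (D : Pic n) : Prop := inter D (D - Kd n) = -2

lemma hasZeroEulerChar_Ed_sub_Ed {i j : ℕ} (hi1 : 1 ≤ i) (hi2 : i ≤ n) (hj1 : 1 ≤ j)
    (hj2 : j ≤ n) (hij : i ≠ j) : HasZeroEulerChar (Ed n i - Ed n j) := by
  simp only [HasZeroEulerChar, inter_sub_left, inter_sub_right, inter_comm (Ed n i) (Kd n),
    inter_comm (Ed n j) (Kd n), inter_Kd_Ed hi1 hi2, inter_Kd_Ed hj1 hj2,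
    inter_Ed_Ed_self hi1 hi2, inter_Ed_Ed_self hj1 hj2, inter_Ed_Ed_of_ne hij,
    inter_Ed_Ed_of_ne hij.symm]
  ring

end Expansion

section Sequence

variable {n : ℕ} (a b : ℤ)

lemma G_zero : G n a b 0 = 0 := rfl

lemma G_of_le {i : ℕ} (h1 : 1 ≤ i) (h2 : i ≤ n) : G n a b i = a • Kd n - Ed n i := by
  rw [G, if_neg (by omega), if_pos h2]

lemma G_add_one : G n a b (n + 1) = b • Kd n - Hd n := by
  rw [G, if_neg (by omega), if_neg (by omega), if_pos rfl]

lemma G_add_two : G n a b (n + 2) = 2 • (b • Kd n - Hd n) := by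
  rw [G, if_neg (by omega), if_neg (by omega), if_neg (by omega)]

lemma hasZeroEulerChar_G_zero_sub_G_of_le_iff {i : ℕ} (h1 : 1 ≤ i) (h2 : i ≤ n) :
    HasZeroEulerChar (G n a b 0 - G n a b i) ↔
      a * (a + 1) * (9 - (n : ℤ)) + 2 * a = -2 := by
  rw [HasZeroEulerChar, G_zero, G_of_le a b h1 h2,
    show (0 : Pic n) - (a • Kd n - Ed n i) = (-a) • Kd n + (0 : ℤ) • Hd n + (1 : ℤ) • Ed n i by
      module,
    inter_Kd_Hd_Ed_self_sub_Kd h1 h2]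
  constructor <;> intro h <;> linarith

lemma hasZeroEulerChar_G_zero_sub_G_add_one_iff :
    HasZeroEulerChar (G n a b 0 - G n a b (n + 1)) ↔
      b * (b + 1) * (9 - (n : ℤ)) + 6 * b = -6 := by
  rw [HasZeroEulerChar, G_zero, G_add_one,
    show (0 : Pic n) - (b • Kd n - Hd n) = (-b) • Kd n + (1 : ℤ) • Hd n by module,
    inter_Kd_Hd_self_sub_Kd]
  constructor <;> intro h <;> linarith

lemma hasZeroEulerChar_G_zero_sub_G_add_two_iff :
    HasZeroEulerChar (G n a b 0 - G n a b (n + 2)) ↔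
      b * (2 * b + 1) * (9 - (n : ℤ)) + 12 * b = -6 := by
  rw [HasZeroEulerChar, G_zero, G_add_two,
    show (0 : Pic n) - 2 • (b • Kd n - Hd n) = (-2 * b) • Kd n + (2 : ℤ) • Hd n by module,
    inter_Kd_Hd_self_sub_Kd]
  constructor <;> intro h <;> linarith

lemma hasZeroEulerChar_G_add_one_sub_G_add_two_iff :
    HasZeroEulerChar (G n a b (n + 1) - G n a b (n + 2)) ↔
      b * (b + 1) * (9 - (n : ℤ)) + 6 * b = -6 := by
  rw [HasZeroEulerChar, G_add_one, G_add_two,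
    show b • Kd n - Hd n - 2 • (b • Kd n - Hd n) = (-b) • Kd n + (1 : ℤ) • Hd n by module,
    inter_Kd_Hd_self_sub_Kd]
  constructor <;> intro h <;> linarith

lemma hasZeroEulerChar_G_sub_G_of_le {i j : ℕ} (hi1 : 1 ≤ i) (hij : i < j) (hj2 : j ≤ n) :
    HasZeroEulerChar (G n a b i - G n a b j) := by
  rw [G_of_le a b hi1 (by omega), G_of_le a b (by omega) hj2,
    show a • Kd n - Ed n i - (a • Kd n - Ed n j) = Ed n j - Ed n i by abel]
  exact hasZeroEulerChar_Ed_sub_Ed (by omega) hj2 hi1 (by omega) hij.ne'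

lemma hasZeroEulerChar_G_of_le_sub_G_add_one_iff {i : ℕ} (h1 : 1 ≤ i) (h2 : i ≤ n) :
    HasZeroEulerChar (G n a b i - G n a b (n + 1)) ↔
      (a - b) * (a - b - 1) * (9 - (n : ℤ)) - 4 * (a - b) = -4 := by
  rw [HasZeroEulerChar, G_of_le a b h1 h2, G_add_one,
    show a • Kd n - Ed n i - (b • Kd n - Hd n) =
      (a - b) • Kd n + (1 : ℤ) • Hd n + (-1 : ℤ) • Ed n i by module,
    inter_Kd_Hd_Ed_self_sub_Kd h1 h2]
  constructor <;> intro h <;> linarith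

lemma hasZeroEulerChar_G_of_le_sub_G_add_two_iff {i : ℕ} (h1 : 1 ≤ i) (h2 : i ≤ n) :
    HasZeroEulerChar (G n a b i - G n a b (n + 2)) ↔
      (a - 2 * b) * (a - 2 * b - 1) * (9 - (n : ℤ)) - 10 * (a - 2 * b) = -10 := by
  rw [HasZeroEulerChar, G_of_le a b h1 h2, G_add_two,
    show a • Kd n - Ed n i - 2 • (b • Kd n - Hd n) =
      (a - 2 * b) • Kd n + (2 : ℤ) • Hd n + (-1 : ℤ) • Ed n i by module,
    inter_Kd_Hd_Ed_self_sub_Kd h1 h2]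
  constructor <;> intro h <;> linarith

end Sequence

/-- For `n ≥ 1` and integers `a, b`, the sequence
`(0, aK−E₁, …, aK−Eₙ, bK−H, 2(bK−H))` satisfies
`(Gᵢ − Gⱼ)·(Gᵢ − Gⱼ − K) = −2` for all `0 ≤ i < j ≤ n+2` (numerical exceptionality)
if and only if the five Diophantine equations hold. -/
theorem stmt8 (n : ℕ) (hn : 1 ≤ n) (a b : ℤ) :
    (∀ i j : ℕ, i < j → j ≤ n + 2 →
        inter (G n a b i - G n a b j) (G n a b i - G n a b j - Kd n) = -2) ↔
    (a * (a + 1) * (9 - (n : ℤ)) + 2 * a = -2 ∧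
     b * (b + 1) * (9 - (n : ℤ)) + 6 * b = -6 ∧
     b * (2 * b + 1) * (9 - (n : ℤ)) + 12 * b = -6 ∧
     (a - b) * (a - b - 1) * (9 - (n : ℤ)) - 4 * (a - b) = -4 ∧
     (a - 2 * b) * (a - 2 * b - 1) * (9 - (n : ℤ)) - 10 * (a - 2 * b) = -10) := by
  constructor
  · intro h
    exact ⟨(hasZeroEulerChar_G_zero_sub_G_of_le_iff a b le_rfl hn).1 (h 0 1 one_pos (by omega)),
      (hasZeroEulerChar_G_zero_sub_G_add_one_iff a b).1 (h 0 (n + 1) (by omega) (by omega)),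
      (hasZeroEulerChar_G_zero_sub_G_add_two_iff a b).1 (h 0 (n + 2) (by omega) le_rfl),
      (hasZeroEulerChar_G_of_le_sub_G_add_one_iff a b le_rfl hn).1
        (h 1 (n + 1) (by omega) (by omega)),
      (hasZeroEulerChar_G_of_le_sub_G_add_two_iff a b le_rfl hn).1
        (h 1 (n + 2) (by omega) le_rfl)⟩
  · rintro ⟨hD, hF, hF₂, hDF, hDF₂⟩ i j hij hj
    rcases (show i = 0 ∨ (1 ≤ i ∧ i ≤ n) ∨ i = n + 1 by omega) with rfl | ⟨hi1, hi2⟩ | rfl <;>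
      rcases (show (1 ≤ j ∧ j ≤ n) ∨ j = n + 1 ∨ j = n + 2 by omega) with ⟨hj1, hj2⟩ | rfl | rfl
    · exact (hasZeroEulerChar_G_zero_sub_G_of_le_iff a b hj1 hj2).2 hD
    · exact (hasZeroEulerChar_G_zero_sub_G_add_one_iff a b).2 hF
    · exact (hasZeroEulerChar_G_zero_sub_G_add_two_iff a b).2 hF₂
    · exact hasZeroEulerChar_G_sub_G_of_le a b hi1 hij hj2
    · exact (hasZeroEulerChar_G_of_le_sub_G_add_one_iff a b hi1 hi2).2 hDF
    · exact (hasZeroEulerChar_G_of_le_sub_G_add_two_iff a b hi1 hi2).2 hDF₂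
    · omega
    · omega
    · exact (hasZeroEulerChar_G_add_one_sub_G_add_two_iff a b).2 hF
end
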